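/- For every positive integer d, every v ∈ {0,1}^d with e_{d−1} ≺_rlex v (so that P(v) is full-dimensional in ℝ^d), and every i ∈ {0,…,d−1}: the inequality x_i ≤ 1 defines a facet of P(v) if and only if neither of the following holds: (first exception) s(v) = 2 and i ∈ Sig(v); (second exception) sig_2(v) < d−2 and sig_2(v) < i ≤ d−1. -/

import Mathlib

open Finset

def ZeroOne (d : ℕ) : Set (Fin d → ℝ) := {x | ∀ i, x i = 0 ∨ x i = 1}

/-- `x` is reverse-lexicographically smaller than `y`:
there is an index `m` with `x m < y m` and `x i = y i` for all `i > m`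
(equivalently, `x m < y m` for `m` the largest index where `x` and `y` differ). -/
def RlexLt {d : ℕ} (x y : Fin d → ℝ) : Prop :=
  ∃ m : Fin d, x m < y m ∧ ∀ i : Fin d, m < i → x i = y i

/-- `X(v)`: the 0/1-points revlex-smaller than `v`. -/
def Xset {d : ℕ} (v : Fin d → ℝ) : Set (Fin d → ℝ) :=
  {x | x ∈ ZeroOne d ∧ RlexLt x v}

/-- The revlex-initial 0/1-polytope `P(v) = conv X(v)`. -/
noncomputable def Pset {d : ℕ} (v : Fin d → ℝ) : Set (Fin d → ℝ) :=
  convexHull ℝ (Xset v)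

/-- `Sig(v)`: the support of `v` (the indices of its one-entries). -/
noncomputable def Sig {d : ℕ} (v : Fin d → ℝ) : Finset (Fin d) :=
  @Finset.filter (Fin d) (fun i => v i = 1) (Classical.decPred _) Finset.univ

/-- `Sig_{>i}(v)`: the elements of `Sig(v)` above `i`. -/
noncomputable def SigGt {d : ℕ} (v : Fin d → ℝ) (i : Fin d) : Finset (Fin d) :=
  (Sig v).filter (fun j => i < j)

noncomputable def adim {d : ℕ} (s : Set (Fin d → ℝ)) : ℕ :=
  Module.finrank ℝ (affineSpan ℝ s).direction

def IsFaceOf {d : ℕ} (P F : Set (Fin d → ℝ)) : Prop :=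
  Convex ℝ F ∧ IsExtreme ℝ P F

noncomputable def cnt {d : ℕ} (p : Fin d → Prop) : ℕ :=
  (@Finset.filter (Fin d) p (Classical.decPred _) Finset.univ).card

/-! Write `l = d - 1` and `t = sig_2(v)`. The inequality `x_i ≤ 1` is valid because `P(v)` lies in
the unit cube, and `P(v)` is full-dimensional since it contains `0` and every unit vector.
A point of `X(v)` with `x_l = 1` branches off `v` at an index of `Sig(v)` other than `l`, hence at
most `t`; so it vanishes on `t < j < l`, and also at `t` if `Sig(v) = {t, l}`. In each exceptional
case this forces a second coordinate `b ≠ i` to vanish whenever `x_i = 1` on `X(v)`, and through the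
valid inequality `x_i + x_b ≤ 1` on all of the face, which therefore has dimension at most `d - 2`.
Otherwise the face contains the indicator vectors of `{i}` and of `{i, j}` for all `j ≠ i`, so it
has dimension `d - 1`. -/

variable {d : ℕ}

lemma mem_Icc_of_mem_convexHull {X : Set (Fin d → ℝ)} (hX : X ⊆ ZeroOne d)
    {x : Fin d → ℝ} (hx : x ∈ convexHull ℝ X) (j : Fin d) : x j ∈ Set.Icc 0 1 := by
  have hcube : X ⊆ Set.univ.pi fun _ => Set.Icc (0 : ℝ) 1 := fun y hy k _ => by
    rcases hX hy k with h | h <;> simp [h]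
  exact convexHull_min hcube (convex_pi fun _ _ => convex_Icc 0 1) hx j (Set.mem_univ j)

lemma eq_zero_of_mem_convexHull {X : Set (Fin d → ℝ)} (hX : X ⊆ ZeroOne d) {a b : Fin d}
    (hab : ∀ y ∈ X, y a = 1 → y b = 0) {x : Fin d → ℝ} (hx : x ∈ convexHull ℝ X)
    (hxa : x a = 1) : x b = 0 := by
  have hsum : X ⊆ {y | y a + y b ≤ 1} := fun y hy => by
    rcases hX hy a with h | h
    · rcases hX hy b with h' | h' <;> simp [h, h']
    · simp [h, hab y hy h]
  have hle : x a + x b ≤ 1 := convexHull_min hsum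
    (convex_halfSpace_le ⟨fun y z => by simp only [Pi.add_apply]; ring,
      fun c y => by simp only [Pi.smul_apply, smul_eq_mul]; ring⟩ 1) hx
  linarith [(mem_Icc_of_mem_convexHull hX hx b).1]

lemma adim_le_sub_card {S : Set (Fin d → ℝ)} (E : Finset (Fin d)) (c : Fin d → ℝ)
    (h : ∀ x ∈ S, ∀ j ∈ E, x j = c j) : adim S ≤ d - E.card := by
  set π : (Fin d → ℝ) →ₗ[ℝ] (E → ℝ) := LinearMap.funLeft ℝ ℝ Subtype.val
  have hsurj : LinearMap.range π = ⊤ :=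
    LinearMap.range_eq_top.2 (LinearMap.funLeft_surjective_of_injective ℝ ℝ _ Subtype.val_injective)
  have hker : (affineSpan ℝ S).direction ≤ LinearMap.ker π := by
    rw [direction_affineSpan, vectorSpan_def, Submodule.span_le]
    rintro _ ⟨x, hx, y, hy, rfl⟩
    ext j
    simp [π, LinearMap.funLeft, h x hx j j.2, h y hy j j.2]
  have hrank := LinearMap.finrank_range_add_finrank_ker π
  rw [hsurj, finrank_top, Module.finrank_fintype_fun_eq_card, Module.finrank_fintype_fun_eq_card,
    Fintype.card_coe, Fintype.card_fin] at hrank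
  have := Submodule.finrank_mono hker
  unfold adim
  omega

lemma card_le_adim {S : Set (Fin d → ℝ)} {p : Fin d → ℝ} (hp : p ∈ S) (J : Finset (Fin d))
    (hJ : ∀ j ∈ J, p + Pi.single j 1 ∈ S) : J.card ≤ adim S := by
  have hli : LinearIndependent ℝ fun j : J => (Pi.single (j : Fin d) 1 : Fin d → ℝ) :=
    (Pi.linearIndependent_single_one (Fin d) ℝ).comp _ Subtype.val_injective
  have hspan : Submodule.span ℝ (Set.range fun j : J => (Pi.single (j : Fin d) 1 : Fin d → ℝ))
      ≤ (affineSpan ℝ S).direction := by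
    rw [Submodule.span_le]
    rintro _ ⟨j, rfl⟩
    simpa using AffineSubspace.vsub_mem_direction (subset_affineSpan ℝ S (hJ j j.2))
      (subset_affineSpan ℝ S hp)
  simpa [adim, finrank_span_eq_card hli] using Submodule.finrank_mono hspan

def charVec (A : Finset (Fin d)) : Fin d → ℝ := fun j => if j ∈ A then 1 else 0

lemma charVec_mem_zeroOne (A : Finset (Fin d)) : charVec A ∈ ZeroOne d := fun j => by
  by_cases h : j ∈ A <;> simp [charVec, h]

lemma charVec_add_single {A : Finset (Fin d)} {j : Fin d} (hj : j ∉ A) :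
    charVec A + Pi.single j 1 = charVec (insert j A) := by
  ext k
  by_cases hk : k = j
  · subst hk; simp [charVec, hj]
  · simp [charVec, hk]

lemma adim_convexHull_eq {X : Set (Fin d → ℝ)} (h₀ : charVec ∅ ∈ X)
    (h₁ : ∀ j, charVec {j} ∈ X) : adim (convexHull ℝ X) = d := by
  refine le_antisymm (by simpa using adim_le_sub_card (S := convexHull ℝ X) ∅ 0 (by simp)) ?_
  have := card_le_adim (subset_convexHull ℝ X h₀) Finset.univ fun j _ => by
    rw [charVec_add_single (Finset.notMem_empty j)]
    exact subset_convexHull ℝ X (by simpa using h₁ j)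
  simpa using this

lemma adim_face_le {X : Set (Fin d → ℝ)} (hX : X ⊆ ZeroOne d) {i b : Fin d} (hbi : b ≠ i)
    (hb : ∀ y ∈ X, y i = 1 → y b = 0) : adim {x ∈ convexHull ℝ X | x i = 1} ≤ d - 2 := by
  have := adim_le_sub_card (S := {x ∈ convexHull ℝ X | x i = 1}) {i, b}
    (fun k => if k = i then 1 else 0) fun x ⟨hx, hxi⟩ k hk => by
      rcases Finset.mem_insert.1 hk with rfl | hk
      · simp [hxi]
      · rw [Finset.mem_singleton.1 hk]
        simp [hbi, eq_zero_of_mem_convexHull hX hb hx hxi]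
  rwa [Finset.card_pair hbi.symm] at this

lemma adim_face_eq {X : Set (Fin d → ℝ)} {i : Fin d} (h₀ : charVec {i} ∈ X)
    (h₁ : ∀ j ≠ i, charVec {i, j} ∈ X) : adim {x ∈ convexHull ℝ X | x i = 1} = d - 1 := by
  refine le_antisymm ?_ ?_
  · simpa using adim_le_sub_card (S := {x ∈ convexHull ℝ X | x i = 1}) {i} 1
      fun x hx k hk => by rw [Finset.mem_singleton.1 hk]; exact hx.2
  · have := card_le_adim (S := {x ∈ convexHull ℝ X | x i = 1})
      ⟨subset_convexHull ℝ X h₀, by simp [charVec]⟩ (Finset.univ.erase i) fun j hj => by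
        have hji := Finset.ne_of_mem_erase hj
        rw [charVec_add_single (by simpa using hji), Finset.pair_comm]
        exact ⟨subset_convexHull ℝ X (h₁ j hji), by simp [charVec]⟩
    simpa using this

lemma le_enum_of_mem {α : Type*} [LinearOrder α] {S : Finset α} {f : ℕ → α} {w k : ℕ}
    (hf : StrictAntiOn f (Set.Icc 1 w)) (himg : ∀ j, j ∈ S ↔ ∃ q, 1 ≤ q ∧ q ≤ w ∧ f q = j)
    (hk : 1 ≤ k) {j : α} (hj : j ∈ S) (hne : ∀ q, 1 ≤ q → q < k → f q ≠ j) : j ≤ f k := by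
  obtain ⟨q, hq1, hqw, rfl⟩ := (himg j).1 hj
  have hkq : k ≤ q := not_lt.1 fun hqk => hne q hq1 hqk rfl
  exact hf.antitoneOn ⟨hk, hkq.trans hqw⟩ ⟨hq1, hqw⟩ hkq

lemma enum_two_spec {α : Type*} [LinearOrder α] {S : Finset α} {f : ℕ → α} {w : ℕ}
    (hf : StrictAntiOn f (Set.Icc 1 w)) (himg : ∀ j, j ∈ S ↔ ∃ q, 1 ≤ q ∧ q ≤ w ∧ f q = j)
    (hw : 2 ≤ w) {l : α} (hl : IsTop l) (hlS : l ∈ S) :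
    f 2 ∈ S ∧ f 2 < l ∧ ∀ j ∈ S, j ≠ l → j ≤ f 2 := by
  have h1 : f 1 = l := le_antisymm (hl _) (le_enum_of_mem hf himg le_rfl hlS (by omega))
  refine ⟨(himg _).2 ⟨2, by omega, hw, rfl⟩, h1 ▸ hf ⟨le_rfl, by omega⟩ ⟨by omega, hw⟩ one_lt_two,
    fun j hj hjl => le_enum_of_mem hf himg one_le_two hj fun q hq1 hq2 => ?_⟩
  obtain rfl : q = 1 := by omega
  exact h1 ▸ hjl.symm

variable {v : Fin d → ℝ}

@[simp]
lemma mem_Sig {j : Fin d} : j ∈ Sig v ↔ v j = 1 := by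
  simp [Sig]

lemma eq_zero_of_notMem_Sig (hv : v ∈ ZeroOne d) {j : Fin d} (hj : j ∉ Sig v) : v j = 0 :=
  (hv j).resolve_right (by simpa using hj)

lemma Xset_subset_zeroOne : Xset v ⊆ ZeroOne d := fun _ hy => hy.1

lemma exists_branch_of_mem_Xset (hv : v ∈ ZeroOne d) {y : Fin d → ℝ} (hy : y ∈ Xset v) :
    ∃ m ∈ Sig v, y m = 0 ∧ ∀ j, m < j → y j = v j := by
  obtain ⟨hy01, m, hm, habove⟩ := hy
  have hym : y m = 0 := (hy01 m).resolve_right fun h => by rcases hv m with h' | h' <;> linarith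
  have hvm : v m = 1 := (hv m).resolve_left fun h' => by rcases hy01 m with h | h <;> linarith
  exact ⟨m, mem_Sig.2 hvm, hym, habove⟩

lemma charVec_mem_Xset (hv : v ∈ ZeroOne d) {A : Finset (Fin d)} {m : Fin d}
    (hm : m ∈ Sig v) (hmA : m ∉ A) (habove : ∀ j, m < j → (j ∈ A ↔ j ∈ Sig v)) :
    charVec A ∈ Xset v := by
  refine ⟨charVec_mem_zeroOne A, m, by simp [charVec, hmA, mem_Sig.1 hm], fun j hj => ?_⟩
  by_cases hjA : j ∈ A
  · simp [charVec, hjA, mem_Sig.1 ((habove j hj).1 hjA)]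
  · simp [charVec, hjA, eq_zero_of_notMem_Sig hv (by rwa [← habove j hj])]

lemma mem_Sig_and_two_le_card_of_rlexLt_single (hv : v ∈ ZeroOne d) {l : Fin d} (hl : IsTop l)
    (h : RlexLt (Pi.single l (1 : ℝ)) v) : l ∈ Sig v ∧ 2 ≤ (Sig v).card := by
  obtain ⟨m, hm, habove⟩ := h
  have hml : m ≠ l := by
    rintro rfl
    rcases hv m with h | h <;> norm_num [h] at hm
  have hlS : l ∈ Sig v := by simp [← habove l ((hl m).lt_of_ne hml)]
  have hmS : m ∈ Sig v := by
    rw [Pi.single_eq_of_ne hml] at hm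
    exact mem_Sig.2 ((hv m).resolve_left hm.ne')
  exact ⟨hlS, Finset.one_lt_card.2 ⟨m, hmS, l, hlS, hml⟩⟩

section SecondLargest

variable {l t : Fin d}

lemma exists_branch_ne_of_mem_Xset (hv : v ∈ ZeroOne d) {y : Fin d → ℝ} (hy : y ∈ Xset v)
    (hyl : y l = 1) : ∃ m ∈ Sig v, m ≠ l ∧ y m = 0 ∧ ∀ j, m < j → y j = v j := by
  obtain ⟨m, hm, hym, habove⟩ := exists_branch_of_mem_Xset hv hy
  refine ⟨m, hm, ?_, hym, habove⟩
  rintro rfl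
  exact one_ne_zero (hyl.symm.trans hym)

lemma Xset_eq_zero_of_lt_of_ne (hv : v ∈ ZeroOne d) (hSig : ∀ j ∈ Sig v, j ≠ l → j ≤ t)
    {y : Fin d → ℝ} (hy : y ∈ Xset v) (hyl : y l = 1) {j : Fin d} (htj : t < j) (hjl : j ≠ l) :
    y j = 0 := by
  obtain ⟨m, hm, hml, -, habove⟩ := exists_branch_ne_of_mem_Xset hv hy hyl
  rw [habove j ((hSig m hm hml).trans_lt htj)]
  exact eq_zero_of_notMem_Sig hv fun hj => (hSig j hj hjl).not_gt htj

lemma Xset_eq_zero_of_Sig_eq_pair (hv : v ∈ ZeroOne d) (hSig : Sig v = {t, l})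
    {y : Fin d → ℝ} (hy : y ∈ Xset v) (hyl : y l = 1) : y t = 0 := by
  obtain ⟨m, hm, hml, hym, -⟩ := exists_branch_ne_of_mem_Xset hv hy hyl
  rw [hSig] at hm
  rcases Finset.mem_insert.1 hm with rfl | hm
  · exact hym
  · exact absurd (Finset.mem_singleton.1 hm) hml

lemma charVec_mem_Xset_of_top_notMem (hv : v ∈ ZeroOne d) (hl : IsTop l) (hlS : l ∈ Sig v)
    {A : Finset (Fin d)} (hlA : l ∉ A) : charVec A ∈ Xset v :=
  charVec_mem_Xset hv hlS hlA fun j hj => absurd (hl j) hj.not_ge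

lemma charVec_mem_Xset_of_lt_second (hv : v ∈ ZeroOne d) (htS : t ∈ Sig v) (htl : t < l)
    (hSig : ∀ j ∈ Sig v, j ≠ l → j ≤ t) (hlS : l ∈ Sig v) {A : Finset (Fin d)}
    (hlA : l ∈ A) (hA : ∀ j ∈ A, j ≠ l → j < t) : charVec A ∈ Xset v := by
  refine charVec_mem_Xset hv htS (fun htA => (hA t htA htl.ne).false) fun j htj => ?_
  by_cases hjl : j = l
  · subst hjl
    exact iff_of_true hlA hlS
  · exact iff_of_false (fun hj => (hA j hj hjl).not_gt htj)
      fun hj => (hSig j hj hjl).not_gt htj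

lemma charVec_pair_mem_Xset_of_three_le_card (hv : v ∈ ZeroOne d) (htS : t ∈ Sig v) (htl : t < l)
    (hSig : ∀ j ∈ Sig v, j ≠ l → j ≤ t) (hlS : l ∈ Sig v) (hcard : 3 ≤ (Sig v).card) :
    charVec {t, l} ∈ Xset v := by
  have hrest : (((Sig v).erase l).erase t).Nonempty := by
    rw [← Finset.card_pos, Finset.card_erase_of_mem (Finset.mem_erase.2 ⟨htl.ne, htS⟩),
      Finset.card_erase_of_mem hlS]
    omega
  set u := (((Sig v).erase l).erase t).max' hrest
  obtain ⟨hut, hul, huS⟩ : u ≠ t ∧ u ≠ l ∧ u ∈ Sig v := by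
    simpa [and_assoc] using Finset.max'_mem _ hrest
  have hut' : u < t := (hSig u huS hul).lt_of_ne hut
  refine charVec_mem_Xset hv huS (by simp [hut, hul]) fun j huj => ?_
  constructor
  · intro hj
    rcases Finset.mem_insert.1 hj with rfl | hj
    · exact htS
    · rwa [Finset.mem_singleton.1 hj]
  · intro hj
    by_contra hjA
    simp only [Finset.mem_insert, Finset.mem_singleton, not_or] at hjA
    exact (Finset.le_max' _ j (by simp [hjA.1, hjA.2, hj])).not_gt huj

lemma exists_coord_forced_zero_of_exception (hv : v ∈ ZeroOne d) (htS : t ∈ Sig v) (htl : t < l)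
    (hSig : ∀ j ∈ Sig v, j ≠ l → j ≤ t) (hlS : l ∈ Sig v) {i : Fin d}
    (hexc : ((Sig v).card = 2 ∧ i ∈ Sig v) ∨ ((t : ℕ) + 1 < l ∧ t < i)) :
    ∃ b ≠ i, ∀ y ∈ Xset v, y i = 1 → y b = 0 := by
  rcases hexc with ⟨hcard, hiS⟩ | ⟨htl', hti⟩
  · have hpair : Sig v = {t, l} := (Finset.eq_of_subset_of_card_le
      (Finset.insert_subset htS (Finset.singleton_subset_iff.2 hlS))
      (by rw [hcard, Finset.card_pair htl.ne])).symm
    rw [hpair] at hiS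
    rcases Finset.mem_insert.1 hiS with rfl | hil
    · refine ⟨l, htl.ne', fun y hy hyi => (hy.1 l).resolve_right fun hyl' => ?_⟩
      simp [Xset_eq_zero_of_Sig_eq_pair hv hpair hy hyl'] at hyi
    · obtain rfl := Finset.mem_singleton.1 hil
      exact ⟨t, htl.ne, fun y hy => Xset_eq_zero_of_Sig_eq_pair hv hpair hy⟩
  · by_cases hil : i = l
    · subst hil
      refine ⟨⟨t + 1, by omega⟩, Fin.ne_of_val_ne (by simp; omega), fun y hy hyi => ?_⟩
      exact Xset_eq_zero_of_lt_of_ne hv hSig hy hyi (Fin.lt_def.2 (by simp))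
        (Fin.ne_of_val_ne (by simp; omega))
    · refine ⟨l, Ne.symm hil, fun y hy hyi => (hy.1 l).resolve_right fun hyl' => ?_⟩
      simp [Xset_eq_zero_of_lt_of_ne hv hSig hy hyl' hti hil] at hyi

lemma charVec_singleton_mem_Xset (hv : v ∈ ZeroOne d) (hl : IsTop l) (htS : t ∈ Sig v)
    (htl : t < l) (hSig : ∀ j ∈ Sig v, j ≠ l → j ≤ t) (hlS : l ∈ Sig v) (i : Fin d) :
    charVec {i} ∈ Xset v := by
  by_cases hil : i = l
  · subst hil
    exact charVec_mem_Xset_of_lt_second hv htS htl hSig hlS (by simp) (by simp)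
  · exact charVec_mem_Xset_of_top_notMem hv hl hlS (by simpa using Ne.symm hil)

lemma charVec_pair_mem_Xset_of_not_exception (hv : v ∈ ZeroOne d) (hl : IsTop l) (htS : t ∈ Sig v)
    (htl : t < l) (hSig : ∀ j ∈ Sig v, j ≠ l → j ≤ t) (hlS : l ∈ Sig v) {i : Fin d}
    (hexc : ¬(((Sig v).card = 2 ∧ i ∈ Sig v) ∨ ((t : ℕ) + 1 < l ∧ t < i))) :
    ∀ j ≠ i, charVec {i, j} ∈ Xset v := by
  have hcard : 2 ≤ (Sig v).card := by
    simpa [Finset.card_pair htl.ne] using Finset.card_le_card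
      (Finset.insert_subset htS (Finset.singleton_subset_iff.2 hlS))
  have hcard₃ : i ∈ Sig v → 3 ≤ (Sig v).card := fun hiS =>
    hcard.lt_of_ne fun h => hexc (Or.inl ⟨h.symm, hiS⟩)
  by_cases hil : i = l
  · subst hil
    have hti : (t : ℕ) + 1 = i := by have := Fin.lt_def.1 htl; omega
    intro j hji
    rcases (Fin.le_def.2 (by have := Fin.lt_def.1 ((hl j).lt_of_ne hji); omega) :
      j ≤ t).lt_or_eq with hjt | rfl
    · exact charVec_mem_Xset_of_lt_second hv htS htl hSig hlS (by simp)
        (by simp [hjt])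
    · rw [Finset.pair_comm]
      exact charVec_pair_mem_Xset_of_three_le_card hv htS htl hSig hlS (hcard₃ hlS)
  · have hit : i ≤ t := le_of_not_gt fun hti =>
      hexc (Or.inr ⟨by have := Fin.lt_def.1 ((hl i).lt_of_ne hil); omega, hti⟩)
    intro j hji
    by_cases hjl : j = l
    · subst hjl
      rcases hit.lt_or_eq with hit | rfl
      · exact charVec_mem_Xset_of_lt_second hv htS htl hSig hlS (by simp) (by simp [hit])
      · exact charVec_pair_mem_Xset_of_three_le_card hv htS htl hSig hlS (hcard₃ htS)
    · exact charVec_mem_Xset_of_top_notMem hv hl hlS (by simp [Ne.symm hil, Ne.symm hjl])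

end SecondLargest

/-- for full-dimensional `P(v)` and every coordinate `i`, the inequality
`x_i ≤ 1` defines a facet of `P(v)` iff neither `s(v) = 2 ∧ i ∈ Sig(v)` nor
`sig_2(v) < d−2 ∧ sig_2(v) < i ≤ d−1` holds (`sig` being the decreasing
enumeration of `Sig(v)`). -/
theorem stmt5 (d : ℕ) (hd : 0 < d) (v : Fin d → ℝ) (hv : v ∈ ZeroOne d)
    (hfull : RlexLt (Pi.single (⟨d - 1, by omega⟩ : Fin d) (1 : ℝ)) v)
    (w : ℕ) (hw : w = (Sig v).card)
    (sig : ℕ → Fin d)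
    (hanti : StrictAntiOn sig (Set.Icc 1 w))
    (himg : ∀ j : Fin d, j ∈ Sig v ↔ ∃ q, 1 ≤ q ∧ q ≤ w ∧ sig q = j)
    (i : Fin d) :
    ((∀ x ∈ Pset v, x i ≤ 1) ∧ adim {x ∈ Pset v | x i = 1} = adim (Pset v) - 1)
    ↔ ¬(((Sig v).card = 2 ∧ i ∈ Sig v) ∨
        ((sig 2 : ℕ) < d - 2 ∧ (sig 2 : ℕ) < (i : ℕ) ∧ (i : ℕ) ≤ d - 1)) := by
  set l : Fin d := ⟨d - 1, by omega⟩ with hl_def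
  have hl : IsTop l := fun j => Fin.le_def.2 (by simp only [hl_def]; omega)
  obtain ⟨hlS, hcard⟩ := mem_Sig_and_two_le_card_of_rlexLt_single hv hl hfull
  obtain ⟨htS, htl, hSig⟩ := enum_two_spec hanti himg (hw ▸ hcard) hl hlS
  have hexc : ((sig 2 : ℕ) < d - 2 ∧ (sig 2 : ℕ) < (i : ℕ) ∧ (i : ℕ) ≤ d - 1) ↔
      ((sig 2 : ℕ) + 1 < l ∧ sig 2 < i) := by
    simp only [hl_def, Fin.lt_def]
    omega
  have hP : adim (Pset v) = d := adim_convexHull_eq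
    (charVec_mem_Xset_of_top_notMem hv hl hlS (Finset.notMem_empty l))
    (charVec_singleton_mem_Xset hv hl htS htl hSig hlS)
  rw [hexc, hP]
  constructor
  · rintro ⟨-, hface⟩ hex
    obtain ⟨b, hbi, hb⟩ := exists_coord_forced_zero_of_exception hv htS htl hSig hlS hex
    have := adim_face_le Xset_subset_zeroOne hbi hb
    have := Fin.lt_def.1 htl
    simp only [Pset] at hface
    omega
  · intro hnex
    refine ⟨fun x hx => (mem_Icc_of_mem_convexHull Xset_subset_zeroOne hx i).2, ?_⟩
    exact adim_face_eq (charVec_singleton_mem_Xset hv hl htS htl hSig hlS i)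
      (charVec_pair_mem_Xset_of_not_exception hv hl htS htl hSig hlS hnex)
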